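/- If n ∈ ℕ, w ∈ A⁺ and the power wⁿ belongs to L(u), then n < 2λ(g+1)C². -/

import Mathlib

open List Filter

section Defs

variable {A : Type*}

/-- The segment `u_[i,j)` of the sequence `u`. -/
def seg (u : ℕ → A) (i j : ℕ) : List A :=
  (List.range (j - i)).map fun k => u (i + k)

/-- A substitution applied to a word, letter by letter. -/
def substWord (σ : A → List A) (w : List A) : List A := w.flatMap σ

/-- `σ^p` applied to a word. -/
def substPow (σ : A → List A) (p : ℕ) (w : List A) : List A := (substWord σ)^[p] w

/-- A substitution is primitive if some power of it sends every letter to a word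
containing every letter. -/
def IsPrimitiveSubst (σ : A → List A) : Prop :=
  ∃ k : ℕ, ∀ a b : A, a ∈ substPow σ k [b]

/-- `u` is a fixed point of `σ`: the image of every prefix of `u` is again a prefix of `u`. -/
def IsFixedPoint (σ : A → List A) (u : ℕ → A) : Prop :=
  ∀ m : ℕ, substWord σ (seg u 0 m) = seg u 0 (substWord σ (seg u 0 m)).length

/-- `u` is aperiodic under the left shift: `T^i u ≠ u` for all `i ≥ 1`. -/
def AperiodicSeq (u : ℕ → A) : Prop := ∀ i : ℕ, 1 ≤ i → (fun n => u (n + i)) ≠ u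

/-- The set `E_p` of natural `p`-cutting points. -/
def cutPoints (σ : A → List A) (u : ℕ → A) (p : ℕ) : Set ℕ :=
  { m | ∃ n : ℕ, m = (substPow σ p (seg u 0 n)).length }

/-- Unilateral recognizability of `σ` (with fixed point `u`). -/
def UnilaterallyRecognizable (σ : A → List A) (u : ℕ → A) : Prop :=
  ∃ L : ℕ, 1 ≤ L ∧ ∀ i j : ℕ,
    seg u i (i + L) = seg u j (j + L) → i ∈ cutPoints σ u 1 → j ∈ cutPoints σ u 1

/-- `L_n(u)`: the set of factors of `u` of length `n`. -/
def factors (u : ℕ → A) (n : ℕ) : Set (List A) := { w | ∃ i : ℕ, w = seg u i (i + n) }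

/-- `L(u)`: the language of `u` (including the empty word). -/
def lang (u : ℕ → A) : Set (List A) := { w | ∃ i n : ℕ, w = seg u i (i + n) }

/-- `w^n`: the concatenation of `n` copies of `w`. -/
def wpow (w : List A) (n : ℕ) : List A := (List.replicate n w).flatten

/-- A nonempty word `v` is primitive if `v = w^n` with `w` nonempty forces `w = v`. -/
def PrimitiveWord (v : List A) : Prop :=
  ∀ w : List A, w ≠ [] → ∀ n : ℕ, 1 ≤ n → v = wpow w n → w = v

/-- `g` is a gap of occurrences of `w` in `u` if every interval of length `g` in `ℤ₊`
contains an occurrence of `w`. -/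
def IsGap (u : ℕ → A) (w : List A) (g : ℕ) : Prop := ∀ i : ℕ, w <:+: seg u i (i + g)

/-- The minimal gap of a word. -/
noncomputable def minGap (u : ℕ → A) (w : List A) : ℕ := sInf { g | IsGap u w g }

/-- `g`: the maximum over `w ∈ L₂(u)` of the minimal gap of `w`. -/
noncomputable def gapConst (u : ℕ → A) : ℕ :=
  sSup { m | ∃ w ∈ factors u 2, m = minGap u w }

/-- A natural `p`-cutting `{α, σ^p(u_{i'}), …, σ^p(u_{i'+k-1}), β}` of `u_[i,i+ℓ)`. -/
def IsNaturalCutting (σ : A → List A) (u : ℕ → A) (p i ℓ : ℕ)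
    (α : List A) (i' k : ℕ) (β : List A) : Prop :=
  1 ≤ k ∧
  α <:+ substPow σ p [u (i' - 1)] ∧
  β <+: substPow σ p [u (i' + k)] ∧
  seg u i (i + ℓ) = α ++ substPow σ p (seg u i' (i' + k)) ++ β ∧
  i + α.length = (substPow σ p (seg u 0 i')).length

section Fin

variable [Fintype A] [Nonempty A] [DecidableEq A]

/-- The incidence matrix of a substitution: the `(a,b)` entry is `|σ(a)|_b`. -/
def incMatrix (σ : A → List A) : Matrix A A ℕ := Matrix.of fun a b => (σ a).count b

/-- The incidence matrix as a real matrix. -/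
noncomputable def incMatrixR (σ : A → List A) : Matrix A A ℝ :=
  Matrix.of fun a b => ((σ a).count b : ℝ)

/-- `S_p = max_{a ∈ A} |σ^p(a)|`. -/
def Sp (σ : A → List A) (p : ℕ) : ℕ :=
  Finset.univ.sup' Finset.univ_nonempty fun a => (substPow σ p [a]).length

/-- `I_p = min_{a ∈ A} |σ^p(a)|`. -/
def Ip (σ : A → List A) (p : ℕ) : ℕ :=
  Finset.univ.inf' Finset.univ_nonempty fun a => (substPow σ p [a]).length

/-- `C = ⌈(max_b β_b)/(min_b β_b)⌉` for a positive eigenvector `β`. -/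
noncomputable def Cst (β : A → ℝ) : ℕ :=
  ⌈(Finset.univ.sup' Finset.univ_nonempty β) / (Finset.univ.inf' Finset.univ_nonempty β)⌉₊

/-- `K = ⌈λ C² max{2(g+1), (#A)²}⌉`. -/
noncomputable def Kst (u : ℕ → A) (lam : ℝ) (β : A → ℝ) : ℕ :=
  ⌈lam * (Cst β : ℝ) ^ 2 *
    max (2 * ((gapConst u : ℝ) + 1)) ((Fintype.card A : ℝ) ^ 2)⌉₊

/-- The constant `p₀` of Lemma 4.2. -/
noncomputable def p0 (u : ℕ → A) (lam : ℝ) (β : A → ℝ) : ℕ :=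
  (Kst u lam β) ^ 2 * ((Cst β) ^ 4 * (Kst u lam β + 1) + 2 * (Cst β) ^ 2 + 1) *
    (∑ n ∈ Finset.Icc ((Cst β) ^ 2 * (Kst u lam β + 1) + 2)
        ((Kst u lam β + 1) * (Cst β) ^ 6 + 2 * (Cst β) ^ 4 + (Cst β) ^ 2 + 2), n) + 1

/-- The constant `L₀ = (C⁴(K+1)+2C²+1) S_{p₀}`. -/
noncomputable def L0 (σ : A → List A) (u : ℕ → A) (lam : ℝ) (β : A → ℝ) : ℕ :=
  ((Cst β) ^ 4 * (Kst u lam β + 1) + 2 * (Cst β) ^ 2 + 1) * Sp σ (p0 u lam β)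

/-- The ℓ¹ norm of a vector. -/
def l1norm (f : A → ℝ) : ℝ := ∑ a, |f a|

/-- The projective metric on positive row vectors. -/
noncomputable def projMetric (x y : A → ℝ) : ℝ :=
  Real.log ((Finset.univ.sup' Finset.univ_nonempty fun a => x a / y a) /
    (Finset.univ.inf' Finset.univ_nonempty fun a => x a / y a))

/-- The Birkhoff contraction coefficient of a matrix. -/
noncomputable def birkhoff (M : Matrix A A ℝ) : ℝ :=
  sSup { r | ∃ x y : A → ℝ, (∀ a, 0 < x a) ∧ (∀ a, 0 < y a) ∧
    LinearIndependent ℝ ![x, y] ∧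
    r = projMetric (Matrix.vecMul x M) (Matrix.vecMul y M) / projMetric x y }

end Fin

/-- Membership in the vertex set `V^*`: pairs `(xac, ybc)` of factors of `u` of length
`N + L₁ + 1` with `a ≠ b` and `|c| = L₁`. -/
def memVstar (u : ℕ → A) (N L₁ : ℕ) (p : List A × List A) : Prop :=
  ∃ (x y c : List A) (a b : A), a ≠ b ∧
    x.length = N ∧ y.length = N ∧ c.length = L₁ ∧
    p.1 = x ++ a :: c ∧ p.2 = y ++ b :: c ∧
    p.1 ∈ factors u (N + L₁ + 1) ∧ p.2 ∈ factors u (N + L₁ + 1)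

/-- An edge between representatives: there is a word `w` with `s'w` a suffix of `σ(s)` and
`t'w` a suffix of `σ(t)`. -/
def edgeRep (σ : A → List A) (p q : List A × List A) : Prop :=
  ∃ w : List A, w ≠ [] ∧ (q.1 ++ w) <:+ substWord σ p.1 ∧ (q.2 ++ w) <:+ substWord σ p.2

/-- An edge in the graph `G` between the unordered pairs represented by `p` and `q`. -/
def graphEdge (σ : A → List A) (p q : List A × List A) : Prop :=
  edgeRep σ p q ∨ edgeRep σ p q.swap ∨ edgeRep σ p.swap q ∨ edgeRep σ p.swap q.swap

/-- A representative generates a gap of natural 1-cutting points. -/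
def genGapRep (σ : A → List A) (p : List A × List A) : Prop :=
  ∃ (α β : A) (γ δ : List A),
    (σ α <:+ σ β ∧ σ α ≠ σ β) ∧
    List.Forall₂ (fun s t => σ s = σ t) γ δ ∧
    (α :: γ) <:+ substWord σ p.1 ∧ (β :: δ) <:+ substWord σ p.2

/-- The unordered pair represented by `p` generates a gap of natural 1-cutting points. -/
def genGap (σ : A → List A) (p : List A × List A) : Prop :=
  genGapRep σ p ∨ genGapRep σ p.swap

/-- The list of consecutive two-letter blocks of a word. -/
def pairsList (l : List A) : List (List A) :=
  List.zipWith (fun a b => [a, b]) l l.tail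

end Defs

/-!
If `wⁿ` occurs in `u` at position `i₀` and `m = |w|`, then `u` is `m`-periodic on a window of
length `nm`. Let `p` be the least exponent with `|σᵖ(a)| > m` for every letter `a`; since some
`σᵖ⁻¹(a')` has length at most `m`, the Perron–Frobenius eigenvector `β` bounds every `|σᵖ(a)|`
by `λC²m`. If `n ≥ 2λ(g+1)C²`, the window therefore contains `g + 1` consecutive blocks
`σᵖ(uₜ)`, hence, by the definition of `g`, the block `σᵖ(v)` of every two-letter factor `v` of `u`.
Every position `s` of `u` lies in such a block `σᵖ(uₜuₜ₊₁)` with at least `m` letters after it,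
so `u_{s+m} = u_s` for all `s`, contradicting aperiodicity.
-/

section Segments

variable {A : Type*} {u : ℕ → A}

@[simp]
lemma seg_length (u : ℕ → A) (i j : ℕ) : (seg u i j).length = j - i := by simp [seg]

lemma seg_getElem {i j e : ℕ} (h : e < (seg u i j).length) : (seg u i j)[e] = u (i + e) := by
  simp [seg]

lemma seg_append {i k j : ℕ} (hik : i ≤ k) (hkj : k ≤ j) :
    seg u i k ++ seg u k j = seg u i j := by
  apply List.ext_getElem (by simp; omega)
  intro e h _
  rcases Nat.lt_or_ge e (k - i) with he | he
  · rw [getElem_append_left (by simpa using he), seg_getElem, seg_getElem]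
  · rw [getElem_append_right (by simpa using he), seg_getElem, seg_getElem]
    congr 1
    simp
    omega

lemma seg_single (i : ℕ) : seg u i (i + 1) = [u i] := by simp [seg]

lemma seg_infix_seg {i a b j : ℕ} (hia : i ≤ a) (hab : a ≤ b) (hbj : b ≤ j) :
    seg u a b <:+: seg u i j :=
  ⟨seg u i a, seg u b j, by rw [seg_append hia hab, seg_append (hia.trans hab) hbj]⟩

lemma seg_eq_append {i j : ℕ} {x y : List A} (hij : i ≤ j) (h : seg u i j = x ++ y) :
    seg u i (i + x.length) = x ∧ seg u (i + x.length) j = y := by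
  have hlen := congrArg length h
  simp only [seg_length, length_append] at hlen
  rw [← seg_append (k := i + x.length) (by omega) (by omega)] at h
  exact append_inj h (by simp)

lemma apply_eq_of_seg_eq {a b c d e : ℕ} (h : seg u a b = seg u c d) (he : a + e < b) :
    u (a + e) = u (c + e) := by
  have hc : e < (seg u c d).length := by rw [← h]; simp; omega
  rw [← seg_getElem (u := u) (i := a) (j := b) (by simp; omega), ← seg_getElem hc]
  exact getElem_of_eq h _

lemma exists_seg_eq_of_infix {x : List A} {i L : ℕ} (h : x <:+: seg u i (i + L)) :
    ∃ q, i ≤ q ∧ q + x.length ≤ i + L ∧ seg u q (q + x.length) = x := by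
  obtain ⟨s, t, hst⟩ := h
  have hlen := congrArg length hst
  simp only [length_append, seg_length] at hlen
  have hsx := (seg_eq_append (by omega) hst.symm).1
  rw [length_append, ← add_assoc] at hsx
  exact ⟨i + s.length, by omega, by omega, (seg_eq_append (by omega) hsx).2⟩

end Segments

section Substitution

variable {A : Type*} {σ : A → List A}

lemma substPow_succ (p : ℕ) (x : List A) :
    substPow σ (p + 1) x = substWord σ (substPow σ p x) :=
  Function.iterate_succ_apply' _ _ _

lemma substPow_add (a b : ℕ) (x : List A) :
    substPow σ (a + b) x = substPow σ a (substPow σ b x) :=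
  Function.iterate_add_apply _ _ _ _

lemma substPow_append (p : ℕ) (x y : List A) :
    substPow σ p (x ++ y) = substPow σ p x ++ substPow σ p y := by
  induction p with
  | zero => rfl
  | succ p ih => simp only [substPow_succ, ih, substWord, flatMap_append]

lemma substPow_cons (p : ℕ) (a : A) (x : List A) :
    substPow σ p (a :: x) = substPow σ p [a] ++ substPow σ p x := by
  rw [← substPow_append, singleton_append]

lemma substPow_infix_of_mem {a : A} {x : List A} (h : a ∈ x) (p : ℕ) :
    substPow σ p [a] <:+: substPow σ p x := by
  obtain ⟨s, t, rfl⟩ := append_of_mem h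
  rw [substPow_append, substPow_cons p a t, ← append_assoc]
  exact infix_append _ _ _

lemma length_le_length_substWord (hσ : ∀ a, σ a ≠ []) (x : List A) :
    x.length ≤ (substWord σ x).length := by
  induction x with
  | nil => simp
  | cons a x ih =>
    have := length_pos_iff.2 (hσ a)
    simp only [substWord, flatMap_cons, length_append, length_cons] at ih ⊢
    omega

lemma length_le_length_substPow (hσ : ∀ a, σ a ≠ []) (p : ℕ) (x : List A) :
    x.length ≤ (substPow σ p x).length := by
  induction p with
  | zero => rfl
  | succ p ih => exact ih.trans (substPow_succ p x ▸ length_le_length_substWord hσ _)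

lemma IsFixedPoint.substPow_seg {u : ℕ → A} (hfix : IsFixedPoint σ u) (p m : ℕ) :
    substPow σ p (seg u 0 m) = seg u 0 (substPow σ p (seg u 0 m)).length := by
  induction p with
  | zero => simp [substPow]
  | succ p ih => rw [substPow_succ, ih, ← hfix]

end Substitution

section CuttingPoints

variable {A : Type*} {σ : A → List A} {u : ℕ → A}

/-- The `t`-th natural `p`-cutting point `|σᵖ(u_[0,t))|`, so that `cutPoints σ u p` is the
range of `cutPoint σ u p`. -/
def cutPoint (σ : A → List A) (u : ℕ → A) (p t : ℕ) : ℕ := (substPow σ p (seg u 0 t)).length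

lemma cutPoint_zero (p : ℕ) : cutPoint σ u p 0 = 0 := by
  rw [cutPoint, substPow, show seg u 0 0 = [] from rfl, Function.iterate_fixed rfl, length_nil]

lemma cutPoint_succ (p t : ℕ) :
    cutPoint σ u p (t + 1) = cutPoint σ u p t + (substPow σ p [u t]).length := by
  rw [cutPoint, ← seg_append t.zero_le t.le_succ, substPow_append, length_append, seg_single,
    cutPoint]

lemma cutPoint_mono (p : ℕ) : Monotone (cutPoint σ u p) :=
  monotone_nat_of_le_succ fun t => by rw [cutPoint_succ]; omega

lemma le_cutPoint (hσ : ∀ a, σ a ≠ []) (p t : ℕ) : t ≤ cutPoint σ u p t := by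
  simpa [cutPoint] using length_le_length_substPow hσ p (seg u 0 t)

lemma IsFixedPoint.seg_cutPoint (hfix : IsFixedPoint σ u) (p t k : ℕ) :
    seg u (cutPoint σ u p t) (cutPoint σ u p (t + k)) = substPow σ p (seg u t (t + k)) := by
  have hprefix : seg u 0 (cutPoint σ u p (t + k)) =
      seg u 0 (cutPoint σ u p t) ++ substPow σ p (seg u t (t + k)) := by
    rw [cutPoint, cutPoint, ← hfix.substPow_seg, ← hfix.substPow_seg, ← substPow_append,
      seg_append t.zero_le (t.le_add_right k)]
  rw [← seg_append (Nat.zero_le _) (cutPoint_mono p (t.le_add_right k))] at hprefix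
  exact append_cancel_left hprefix

lemma exists_cutPoint_le_lt_succ (hσ : ∀ a, σ a ≠ []) (p s : ℕ) :
    ∃ t, cutPoint σ u p t ≤ s ∧ s < cutPoint σ u p (t + 1) := by
  classical
  have hex : ∃ t, s < cutPoint σ u p (t + 1) := ⟨s, le_cutPoint hσ p (s + 1)⟩
  refine ⟨Nat.find hex, ?_, Nat.find_spec hex⟩
  cases ht : Nat.find hex with
  | zero => rw [cutPoint_zero]; exact s.zero_le
  | succ t => exact not_lt.1 (Nat.find_min hex (ht ▸ t.lt_succ_self))

variable [Fintype A] [Nonempty A]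

lemma length_substPow_le_Sp (p : ℕ) (a : A) : (substPow σ p [a]).length ≤ Sp σ p :=
  Finset.le_sup' (fun a => (substPow σ p [a]).length) (Finset.mem_univ a)

lemma cutPoint_add_le (p t k : ℕ) : cutPoint σ u p (t + k) ≤ cutPoint σ u p t + k * Sp σ p := by
  induction k with
  | zero => simp
  | succ k ih =>
    rw [← add_assoc, cutPoint_succ, add_one_mul]
    have := length_substPow_le_Sp (σ := σ) p (u (t + k))
    omega

lemma exists_cutPoint_mem_Icc (hσ : ∀ a, σ a ≠ []) (p i : ℕ) :
    ∃ t, i ≤ cutPoint σ u p t ∧ cutPoint σ u p t ≤ i + Sp σ p := by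
  obtain ⟨t, hti, hit⟩ := exists_cutPoint_le_lt_succ (u := u) hσ p i
  have := cutPoint_add_le (σ := σ) (u := u) p t 1
  exact ⟨t + 1, hit.le, by omega⟩

end CuttingPoints

section PerronFrobenius

variable {A : Type*} [Fintype A] [DecidableEq A] {σ : A → List A} {lam : ℝ} {β : A → ℝ}

lemma sum_count_eq_length (l : List A) : ∑ b, l.count b = l.length := by
  simpa using Multiset.sum_count_eq_card (s := Finset.univ) (m := (l : Multiset A)) (by simp)

lemma count_substWord (x : List A) (b : A) :
    (substWord σ x).count b = ∑ c, x.count c * (σ c).count b := by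
  induction x with
  | nil => simp [substWord]
  | cons a x ih =>
    rw [substWord, flatMap_cons, count_append, ← substWord, ih]
    simp [count_cons, add_mul, Finset.sum_add_distrib, add_comm]

lemma incMatrixR_pow_apply (p : ℕ) (a b : A) :
    (incMatrixR σ ^ p) a b = (substPow σ p [a]).count b := by
  induction p generalizing b with
  | zero => by_cases h : a = b <;> simp [substPow, h]
  | succ p ih =>
    rw [pow_succ, Matrix.mul_apply, substPow_succ, count_substWord]
    push_cast
    simp only [ih]
    rfl

lemma incMatrixR_pow_mulVec (heig : (incMatrixR σ).mulVec β = lam • β) (p : ℕ) :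
    (incMatrixR σ ^ p).mulVec β = lam ^ p • β := by
  induction p with
  | zero => simp
  | succ p ih =>
    rw [pow_succ', ← Matrix.mulVec_mulVec, ih, Matrix.mulVec_smul, heig, smul_smul, pow_succ]

lemma pow_mul_eq_sum_count (heig : (incMatrixR σ).mulVec β = lam • β) (p : ℕ) (a : A) :
    lam ^ p * β a = ∑ b, ((substPow σ p [a]).count b : ℝ) * β b := by
  simpa [Matrix.mulVec, dotProduct, incMatrixR_pow_apply] using
    (congrFun (incMatrixR_pow_mulVec heig p) a).symm

variable [Nonempty A]

lemma inf'_mul_length_le (heig : (incMatrixR σ).mulVec β = lam • β) (p : ℕ) (a : A) :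
    Finset.univ.inf' Finset.univ_nonempty β * (substPow σ p [a]).length ≤ lam ^ p * β a := by
  rw [pow_mul_eq_sum_count heig, ← sum_count_eq_length, Nat.cast_sum, Finset.mul_sum]
  refine Finset.sum_le_sum fun b _ => ?_
  rw [mul_comm]
  exact mul_le_mul_of_nonneg_left (Finset.inf'_le β (Finset.mem_univ b)) (Nat.cast_nonneg _)

lemma pow_mul_le_sup'_mul_length (heig : (incMatrixR σ).mulVec β = lam • β) (p : ℕ) (a : A) :
    lam ^ p * β a ≤ Finset.univ.sup' Finset.univ_nonempty β * (substPow σ p [a]).length := by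
  rw [pow_mul_eq_sum_count heig, ← sum_count_eq_length, Nat.cast_sum, Finset.mul_sum]
  refine Finset.sum_le_sum fun b _ => ?_
  rw [mul_comm]
  exact mul_le_mul_of_nonneg_right (Finset.le_sup' β (Finset.mem_univ b)) (Nat.cast_nonneg _)

omit [DecidableEq A] in
lemma inf'_pos (hβ : ∀ a, 0 < β a) : 0 < Finset.univ.inf' Finset.univ_nonempty β :=
  (Finset.lt_inf'_iff _).2 fun a _ => hβ a

lemma eigenvalue_pos (hσ : ∀ a, σ a ≠ []) (heig : (incMatrixR σ).mulVec β = lam • β)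
    (hβ : ∀ a, 0 < β a) : 0 < lam := by
  obtain ⟨a⟩ := ‹Nonempty A›
  have hlen : (1 : ℝ) ≤ (substPow σ 1 [a]).length := by
    exact_mod_cast length_le_length_substPow hσ 1 [a]
  have := inf'_mul_length_le heig 1 a
  rw [pow_one] at this
  have := inf'_pos hβ
  by_contra! h
  nlinarith [hβ a]

omit [DecidableEq A] in
lemma sup'_le_Cst_mul_inf' (hβ : ∀ a, 0 < β a) :
    Finset.univ.sup' Finset.univ_nonempty β ≤ Cst β * Finset.univ.inf' Finset.univ_nonempty β :=
  (div_le_iff₀ (inf'_pos hβ)).1 (Nat.le_ceil _)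

lemma Sp_succ_le (hσ : ∀ a, σ a ≠ []) (heig : (incMatrixR σ).mulVec β = lam • β)
    (hβ : ∀ a, 0 < β a) (p : ℕ) (a : A) :
    (Sp σ (p + 1) : ℝ) ≤ lam * Cst β ^ 2 * (substPow σ p [a]).length := by
  set M := Finset.univ.sup' Finset.univ_nonempty β
  set m := Finset.univ.inf' Finset.univ_nonempty β
  obtain ⟨b, -, hb⟩ := Finset.exists_mem_eq_sup' Finset.univ_nonempty
    fun b => (substPow σ (p + 1) [b]).length
  have hm := inf'_pos hβ
  have hlam := eigenvalue_pos hσ heig hβ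
  have hM : M ≤ Cst β * m := sup'_le_Cst_mul_inf' hβ
  have hupper : m * Sp σ (p + 1) ≤ lam * (lam ^ p * M) := by
    rw [Sp, hb, ← mul_assoc, ← pow_succ']
    exact (inf'_mul_length_le heig _ b).trans
      (mul_le_mul_of_nonneg_left (Finset.le_sup' _ (Finset.mem_univ b)) (by positivity))
  have hlower : lam ^ p * m ≤ M * (substPow σ p [a]).length :=
    (mul_le_mul_of_nonneg_left (Finset.inf'_le _ (Finset.mem_univ a)) (by positivity)).trans
      (pow_mul_le_sup'_mul_length heig p a)
  have hM0 : 0 ≤ M := (hβ a).le.trans (Finset.le_sup' β (Finset.mem_univ a))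
  have hlam0 := hlam.le
  have key : m * m * Sp σ (p + 1) ≤ m * m * (lam * Cst β ^ 2 * (substPow σ p [a]).length) :=
    calc m * m * Sp σ (p + 1) = m * (m * Sp σ (p + 1)) := by ring
      _ ≤ m * (lam * (lam ^ p * M)) := by gcongr
      _ = lam * M * (lam ^ p * m) := by ring
      _ ≤ lam * M * (M * (substPow σ p [a]).length) := by gcongr
      _ = lam * (substPow σ p [a]).length * (M * M) := by ring
      _ ≤ lam * (substPow σ p [a]).length * ((Cst β * m) * (Cst β * m)) := by gcongr
      _ = m * m * (lam * Cst β ^ 2 * (substPow σ p [a]).length) := by ring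
  exact le_of_mul_le_mul_left key (by positivity)

lemma succ_mul_Sp_succ_le (hσ : ∀ a, σ a ≠ []) (heig : (incMatrixR σ).mulVec β = lam • β)
    (hβ : ∀ a, 0 < β a) {p g n m : ℕ} {a : A} (ha : (substPow σ p [a]).length ≤ m)
    (hn : 2 * lam * ((g : ℝ) + 1) * Cst β ^ 2 ≤ n) : (g + 1) * Sp σ (p + 1) ≤ n * m := by
  have hlam := eigenvalue_pos hσ heig hβ
  have hS : (Sp σ (p + 1) : ℝ) ≤ lam * Cst β ^ 2 * m :=
    (Sp_succ_le hσ heig hβ p a).trans (by gcongr)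
  have hX : 0 ≤ ((g : ℝ) + 1) * (lam * Cst β ^ 2 * m) := by positivity
  have : ((g : ℝ) + 1) * Sp σ (p + 1) ≤ n * m :=
    calc ((g : ℝ) + 1) * Sp σ (p + 1) ≤ ((g : ℝ) + 1) * (lam * Cst β ^ 2 * m) := by gcongr
      _ ≤ 2 * lam * ((g : ℝ) + 1) * Cst β ^ 2 * m := by linarith
      _ ≤ n * m := by gcongr
  exact_mod_cast this

end PerronFrobenius

section Growth

variable {A : Type*} [Fintype A] {σ : A → List A}

lemma two_le_length_substPow (h2 : 2 ≤ Fintype.card A) {k : ℕ}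
    (hk : ∀ a b : A, a ∈ substPow σ k [b]) (b : A) : 2 ≤ (substPow σ k [b]).length := by
  classical
  calc 2 ≤ Fintype.card A := h2
    _ = (substPow σ k [b]).toFinset.card := by
      rw [Finset.eq_univ_of_forall fun a => mem_toFinset.2 (hk a b), Finset.card_univ]
    _ ≤ _ := toFinset_card_le _

omit [Fintype A] in
lemma two_pow_mul_length_le {k : ℕ} (hk : ∀ a : A, 2 ≤ (substPow σ k [a]).length) (j : ℕ)
    (x : List A) : 2 ^ j * x.length ≤ (substPow σ (k * j) x).length := by
  have hdouble : ∀ y : List A, 2 * y.length ≤ (substPow σ k y).length := by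
    intro y
    induction y with
    | nil => simp
    | cons a y ih => rw [substPow_cons, length_append, length_cons]; linarith [hk a]
  induction j generalizing x with
  | zero => simp [substPow]
  | succ j ih =>
    rw [Nat.mul_succ, substPow_add, pow_succ, mul_assoc]
    exact (ih _).trans' (Nat.mul_le_mul_left _ (hdouble x))

lemma exists_forall_lt_length_substPow (h2 : 2 ≤ Fintype.card A) (hprim : IsPrimitiveSubst σ)
    (m : ℕ) : ∃ p, ∀ a : A, m < (substPow σ p [a]).length := by
  obtain ⟨k, hk⟩ := hprim
  refine ⟨k * m, fun a => ?_⟩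
  exact m.lt_two_pow_self.trans_le
    (by simpa using two_pow_mul_length_le (two_le_length_substPow h2 hk) m [a])

lemma exists_minimal_exponent [Nonempty A] {m : ℕ} (hm : 1 ≤ m)
    (h : ∃ p, ∀ a : A, m < (substPow σ p [a]).length) :
    ∃ q, (∀ a, m < (substPow σ (q + 1) [a]).length) ∧ ∃ a, (substPow σ q [a]).length ≤ m := by
  classical
  cases hq : Nat.find h with
  | zero =>
    obtain ⟨a⟩ := ‹Nonempty A›
    have := hq ▸ Nat.find_spec h a
    simp [substPow] at this
    omega
  | succ q =>
    refine ⟨q, hq ▸ Nat.find_spec h, ?_⟩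
    simpa using Nat.find_min h (hq ▸ q.lt_succ_self)

end Growth

section Gaps

variable {A : Type*} {σ : A → List A} {u : ℕ → A}

lemma IsGap.mono {w : List A} {g g' : ℕ} (h : IsGap u w g) (hg : g ≤ g') : IsGap u w g' :=
  fun i => (h i).trans (seg_infix_seg le_rfl (by omega) (by omega))

variable [Fintype A]

lemma exists_seg_two_infix_substPow (h2 : 2 ≤ Fintype.card A) (hprim : IsPrimitiveSubst σ)
    (hfix : IsFixedPoint σ u) (j : ℕ) : ∃ q, ∀ b, seg u j (j + 2) <:+: substPow σ q [b] := by
  obtain ⟨k, hk⟩ := hprim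
  obtain ⟨p, hp⟩ := exists_forall_lt_length_substPow h2 ⟨k, hk⟩ (j + 2)
  have hprefix : substPow σ p [u 0] = seg u 0 (substPow σ p [u 0]).length := by
    have h01 : seg u 0 1 = [u 0] := seg_single 0
    simpa only [h01] using hfix.substPow_seg p 1
  refine ⟨p + k, fun b => ?_⟩
  rw [substPow_add]
  refine IsInfix.trans ?_ (substPow_infix_of_mem (hk (u 0) b) p)
  rw [hprefix]
  exact seg_infix_seg j.zero_le (by omega) (hp (u 0)).le

variable [Nonempty A]

lemma exists_isGap_seg_two (hσ : ∀ a, σ a ≠ []) (h2 : 2 ≤ Fintype.card A)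
    (hprim : IsPrimitiveSubst σ) (hfix : IsFixedPoint σ u) (j : ℕ) :
    ∃ G, IsGap u (seg u j (j + 2)) G := by
  obtain ⟨q, hq⟩ := exists_seg_two_infix_substPow h2 hprim hfix j
  refine ⟨2 * Sp σ q, fun i => ?_⟩
  obtain ⟨t, hit, hti⟩ := exists_cutPoint_mem_Icc (u := u) hσ q i
  have hnext := cutPoint_add_le (σ := σ) (u := u) q t 1
  have hblock := hfix.seg_cutPoint q t 1
  rw [seg_single] at hblock
  exact (hblock ▸ hq (u t)).trans (seg_infix_seg hit (cutPoint_mono q t.le_succ) (by omega))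

lemma isGap_gapConst (hσ : ∀ a, σ a ≠ []) (h2 : 2 ≤ Fintype.card A)
    (hprim : IsPrimitiveSubst σ) (hfix : IsFixedPoint σ u) (j : ℕ) :
    IsGap u (seg u j (j + 2)) (gapConst u) := by
  have hfin : (factors u 2).Finite :=
    (Set.finite_range fun ab : A × A => [ab.1, ab.2]).subset <| by
      rintro _ ⟨i, rfl⟩
      exact ⟨(u i, u (i + 1)), by simp [seg, range_succ]⟩
  have hbdd : BddAbove {g | ∃ v ∈ factors u 2, g = minGap u v} :=
    (hfin.image (minGap u)).bddAbove.mono <| by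
      rintro _ ⟨v, hv, rfl⟩
      exact ⟨v, hv, rfl⟩
  exact IsGap.mono (Nat.sInf_mem (exists_isGap_seg_two hσ h2 hprim hfix j))
    (le_csSup hbdd ⟨_, ⟨j, rfl⟩, rfl⟩)

end Gaps

section Periodicity

variable {A : Type*} {u : ℕ → A}

lemma wpow_succ (w : List A) (n : ℕ) : wpow w (n + 1) = w ++ wpow w n := by
  simp [wpow, replicate_succ]

lemma wpow_succ' (w : List A) (n : ℕ) : wpow w (n + 1) = wpow w n ++ w := by
  simp [wpow, replicate_succ']

lemma length_wpow (w : List A) (n : ℕ) : (wpow w n).length = n * w.length := by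
  simp [wpow]

lemma apply_add_length_of_seg_eq_wpow {w : List A} {i n y : ℕ}
    (h : seg u i (i + n * w.length) = wpow w n) (hiy : i ≤ y)
    (hy : y + w.length < i + n * w.length) : u (y + w.length) = u y := by
  obtain ⟨n, rfl⟩ : ∃ k, n = k + 1 :=
    Nat.exists_eq_add_one.2 (Nat.pos_of_ne_zero (by rintro rfl; simp at hy; omega))
  have hle : i ≤ i + (n + 1) * w.length := by omega
  have hhead := (seg_eq_append hle (h.trans (wpow_succ' w n))).1
  have htail := (seg_eq_append hle (h.trans (wpow_succ w n))).2
  rw [length_wpow] at hhead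
  have := apply_eq_of_seg_eq (e := y - i) (htail.trans hhead.symm)
    (by rw [add_one_mul] at hy ⊢; omega)
  convert this using 2 <;> omega

variable [Fintype A] [Nonempty A] {σ : A → List A}

lemma apply_add_eq_of_window (hσ : ∀ a, σ a ≠ []) (hfix : IsFixedPoint σ u) {p m g i₀ : ℕ}
    (hlong : ∀ a, m < (substPow σ p [a]).length) (hgap : ∀ j, IsGap u (seg u j (j + 2)) g)
    (hper : ∀ y, i₀ ≤ y → y + m < i₀ + (g + 1) * Sp σ p → u (y + m) = u y) (s : ℕ) :
    u (s + m) = u s := by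
  obtain ⟨t, hts, hst⟩ := exists_cutPoint_le_lt_succ (u := u) hσ p s
  obtain ⟨t₀, hit₀, ht₀i⟩ := exists_cutPoint_mem_Icc (u := u) hσ p i₀
  obtain ⟨j, ht₀j, hjt₀, hj⟩ := exists_seg_eq_of_infix (hgap t t₀)
  simp only [seg_length, Nat.add_sub_cancel_left] at ht₀j hjt₀ hj
  -- `s` lies in the block `σᵖ(u_[t,t+2))`, which recurs as `σᵖ(u_[j,j+2))` inside the window
  have hblock : seg u (cutPoint σ u p j) (cutPoint σ u p (j + 2)) =
      seg u (cutPoint σ u p t) (cutPoint σ u p (t + 2)) := by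
    rw [hfix.seg_cutPoint, hfix.seg_cutPoint, hj]
  have hlen := congrArg length hblock
  simp only [seg_length] at hlen
  have hnext : cutPoint σ u p (t + 2) =
      cutPoint σ u p (t + 1) + (substPow σ p [u (t + 1)]).length :=
    cutPoint_succ p (t + 1)
  have hlong' := hlong (u (t + 1))
  have hj₂ := cutPoint_mono (σ := σ) (u := u) p (show j + 2 ≤ t₀ + g by omega)
  have hwin := cutPoint_add_le (σ := σ) (u := u) p t₀ g
  have hjj := cutPoint_mono (σ := σ) (u := u) p (show j ≤ j + 2 by omega)
  have htt := cutPoint_mono (σ := σ) (u := u) p (show t ≤ t + 2 by omega)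
  have ht₀j' := cutPoint_mono (σ := σ) (u := u) p ht₀j
  set d := s - cutPoint σ u p t
  have hs : u (cutPoint σ u p j + d) = u s := by
    have := apply_eq_of_seg_eq hblock (e := d) (by omega)
    rwa [show cutPoint σ u p t + d = s by omega] at this
  have hsm : u (cutPoint σ u p j + d + m) = u (s + m) := by
    have := apply_eq_of_seg_eq hblock (e := d + m) (by omega)
    rwa [show cutPoint σ u p t + (d + m) = s + m by omega, ← add_assoc] at this
  rw [← hsm, hper _ (by omega) (by rw [add_one_mul]; omega), hs]

end Periodicity

/-- Lemma 2.3 (Mossé, Théorème 2.4): if `wⁿ ∈ L(u)` with `w ∈ A⁺`, then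
`n < 2 λ (g+1) C²`. -/
theorem stmt_4 (A : Type*) [Fintype A] [DecidableEq A] [Nonempty A]
    (h2 : 2 ≤ Fintype.card A)
    (σ : A → List A) (hσne : ∀ a, σ a ≠ [])
    (hprim : IsPrimitiveSubst σ)
    (u : ℕ → A) (hfix : IsFixedPoint σ u) (hap : AperiodicSeq u)
    (lam : ℝ) (β : A → ℝ) (hβ : ∀ a, 0 < β a)
    (heig : (incMatrixR σ).mulVec β = lam • β) :
    ∀ (n : ℕ) (w : List A), 1 ≤ n → w ≠ [] → wpow w n ∈ lang u →
      (n : ℝ) < 2 * lam * ((gapConst u : ℝ) + 1) * (Cst β : ℝ) ^ 2 := by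
  rintro n w - hw ⟨i₀, N, hocc⟩
  by_contra! hn
  have hm : 1 ≤ w.length := length_pos_iff.2 hw
  obtain rfl : N = n * w.length := by simpa [length_wpow] using (congrArg length hocc).symm
  obtain ⟨q, hlong, a, ha⟩ :=
    exists_minimal_exponent hm (exists_forall_lt_length_substPow h2 hprim w.length)
  have hwindow := succ_mul_Sp_succ_le hσne heig hβ ha hn
  refine hap w.length hm (funext (apply_add_eq_of_window (i₀ := i₀) hσne hfix hlong
    (isGap_gapConst hσne h2 hprim hfix) fun y hiy hy => ?_))
  exact apply_add_length_of_seg_eq_wpow hocc.symm hiy (by omega)
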